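/- For the codifferential d₆ = ψ_f^{ee}, the cohomology of the operator D_e on the complex E (cochains valued in e) is exactly 1-dimensional in each degree n ≥ 0, spanned by the DeCleene cocycle Ch^n_e, where Ch^{2m}_e = θ^m φ_e and Ch^{2m+1}_e = θ^m φ^e_e with θ = λ^{ef} − λ^{fe}. -/
import Mathlib


/-! The `E`-part of the Hochschild complex of the nilpotent codifferential
`d₆ = ψ_f^{ee}` on `W = ⟨e,f⟩` (`false = e` even, `true = f` odd):
cochains valued in `e`, the operator `D_e(φ^I_e) = (−1)^{|I|} φ^I_e ∘ ψ_f^{ee}`,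
and the DeCleene map `θ = λ^{ef} − λ^{fe}`. -/

/-- A degree-`n` multi-index of basis elements of `W`. -/
abbrev Idx (n : ℕ) := Fin n → Bool

/-- A degree-`n` cochain valued in `e`: the element `Σ_I (ε I)·φ^I_e` of `Eⁿ`. -/
abbrev ECochain (n : ℕ) := Idx n → ℂ

/-- Parity (0 or 1) of a basis element of `W`. -/
def pb (b : Bool) : ℕ := if b then 1 else 0

/-- Total parity count of a multi-index. -/
def pc {n : ℕ} (J : Idx n) : ℕ := ∑ i, pb (J i)

/-- Parity count of the length-`t` prefix of a multi-index. -/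
def pcP {n : ℕ} (J : Idx n) (t : ℕ) : ℕ :=
  ∑ i ∈ Finset.univ.filter (fun i : Fin n => i.val < t), pb (J i)

/-- The sign `(−1)^m`. -/
noncomputable def msign (m : ℕ) : ℂ := (-1) ^ m

/-- Replace the adjacent pair of entries at positions `k, k+1` of `J` by the single entry `j`. -/
def repl {n : ℕ} (J : Idx (n + 1)) (k : Fin n) (j : Bool) : Idx n :=
  fun i => if i.val < k.val then J i.castSucc else if i.val = k.val then j else J i.succ

/-- The operator `D_e : Eⁿ → Eⁿ⁺¹`, `D_e(φ^I_e) = (−1)^{|I|} φ^I_e ∘ ψ_f^{ee}`: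
the `E`-valued component of the Hochschild coboundary `[d₆, −]`, with the Koszul
insertion signs of the composition `φ ∘ ψ`. -/
noncomputable def Dehat {n : ℕ} (ε : ECochain n) : ECochain (n + 1) := fun J =>
  ∑ k : Fin n,
    msign (pc (repl J k true) + pcP J k.val) *
      ((if J k.castSucc = false ∧ J k.succ = false then (1 : ℂ) else 0) *
        ε (repl J k true))

/-- The prepending operator `λ^{ab}`, with `λ^{ab}(φ^J_e) = φ^{abJ}_e`. -/
noncomputable def lamPre (a b : Bool) {n : ℕ} (ε : ECochain n) : ECochain (n + 2) :=
  fun J => (if J 0 = a ∧ J 1 = b then (1 : ℂ) else 0) * ε (fun i => J i.succ.succ)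

/-- The DeCleene map `θ = λ^{ef} − λ^{fe}`. -/
noncomputable def theta {n : ℕ} (ε : ECochain n) : ECochain (n + 2) :=
  lamPre false true ε - lamPre true false ε

/-- `D_e` as a linear map `Eⁿ →ₗ Eⁿ⁺¹`. -/
noncomputable def DehatLin (n : ℕ) : ECochain n →ₗ[ℂ] ECochain (n + 1) where
  toFun := Dehat
  map_add' φ ψ := by
    funext J
    simp only [Dehat, Pi.add_apply, mul_add, Finset.sum_add_distrib]
  map_smul' c φ := by
    funext J
    simp only [Dehat, Pi.smul_apply, smul_eq_mul, RingHom.id_apply,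
      Finset.mul_sum, mul_assoc, mul_left_comm]

/-- `D_e`-cocycles. -/
noncomputable def ZE (n : ℕ) : Submodule ℂ (ECochain n) := LinearMap.ker (DehatLin n)

/-- `D_e`-coboundaries (none in degree `0`). -/
noncomputable def BE : (n : ℕ) → Submodule ℂ (ECochain n)
  | 0 => ⊥
  | (n + 1) => LinearMap.range (DehatLin n)

/-- The cohomology of `D_e` on the `E`-complex. -/
abbrev HE (n : ℕ) := (ZE n) ⧸ (Submodule.comap (ZE n).subtype (BE n))

/-- The DeCleene cocycles: `Ch⁰ = φ_e`, `Ch¹ = φ^e_e`, `Ch^{n+2} = θ(Chⁿ)`. -/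
noncomputable def Ch : (n : ℕ) → ECochain n
  | 0 => fun _ => 1
  | 1 => fun J => if J 0 = false then 1 else 0
  | (n + 2) => theta (Ch n)

-- infrastructure
lemma pc_cons {n : ℕ} (a : Bool) (J : Idx n) : pc (Fin.cons a J) = pb a + pc J := by
  simp [pc, Fin.sum_univ_succ]

lemma pc_head_tail {n : ℕ} (J : Idx (n+1)) : pc J = pb (J 0) + pc (Fin.tail J) := by
  simp [pc, Fin.sum_univ_succ, Fin.tail]

lemma pcP_eq {n : ℕ} (J : Idx n) (t : ℕ) :
    pcP J t = ∑ i : Fin n, if i.val < t then pb (J i) else 0 := by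
  rw [pcP, Finset.sum_filter]

lemma pcP_zero {n : ℕ} (J : Idx n) : pcP J 0 = 0 := by simp [pcP_eq]

lemma pcP_cons_succ {n : ℕ} (a : Bool) (J : Idx n) (t : ℕ) :
    pcP (Fin.cons a J) (t + 1) = pb a + pcP J t := by
  simp [pcP_eq, Fin.sum_univ_succ, Nat.succ_lt_succ_iff]

lemma repl_cons_zero {n : ℕ} (a : Bool) (J : Idx (n+1)) (j : Bool) :
    repl (Fin.cons a J) 0 j = Fin.cons j (Fin.tail J) := by
  funext i
  induction i using Fin.cases with
  | zero => simp [repl]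
  | succ i => simp [repl, Fin.tail]

lemma repl_cons_succ {n : ℕ} (a : Bool) (J : Idx (n+1)) (k : Fin n) (j : Bool) :
    repl (Fin.cons a J) k.succ j = Fin.cons a (repl J k j) := by
  funext i
  induction i using Fin.cases with
  | zero => simp [repl]
  | succ i =>
      simp only [repl, Fin.cons_succ, Fin.val_succ, ← Fin.succ_castSucc,
        Nat.add_lt_add_iff_right, Nat.add_right_cancel_iff]

lemma pc_repl {n : ℕ} (J : Idx (n+1)) (k : Fin n) (j : Bool) :
    pc (repl J k j) + pb (J k.castSucc) + pb (J k.succ) = pc J + pb j := by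
  induction n with
  | zero => exact k.elim0
  | succ m ih =>
      obtain ⟨a, T, rfl⟩ : ∃ a T, J = Fin.cons a T := ⟨J 0, Fin.tail J, (Fin.cons_self_tail J).symm⟩
      induction k using Fin.cases with
      | zero =>
          rw [repl_cons_zero, pc_cons, Fin.castSucc_zero, Fin.cons_zero,
            Fin.cons_succ, pc_cons, pc_head_tail T]
          omega
      | succ k =>
          rw [repl_cons_succ, pc_cons, pc_cons, ← Fin.succ_castSucc, Fin.cons_succ,
            Fin.cons_succ]
          have := ih T k
          omega

-- sign lemmas
lemma msign_add (x y : ℕ) : msign (x + y) = msign x * msign y := by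
  simp [msign, pow_add]

lemma msign_sq (x : ℕ) : msign x * msign x = 1 := by
  rw [← msign_add, ← two_mul, msign, pow_mul]; norm_num

lemma msign_succ (x : ℕ) : msign (x + 1) = -msign x := by
  simp [msign, pow_succ]

lemma msign_cancel (p x y : ℕ) : msign (p + x + (p + y)) = msign (x + y) := by
  have : p + x + (p + y) = (p + p) + (x + y) := by omega
  rw [this, msign_add, ← two_mul, msign, pow_mul]; norm_num

-- cons2
def cons2 {n : ℕ} (a b : Bool) (X : Idx n) : Idx (n + 2) := Fin.cons a (Fin.cons b X)

lemma cons2_zero {n : ℕ} (a b : Bool) (X : Idx n) : cons2 a b X 0 = a := rfl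

lemma cons2_one {n : ℕ} (a b : Bool) (X : Idx n) : cons2 a b X 1 = b := by
  rw [cons2, ← Fin.succ_zero_eq_one, Fin.cons_succ, Fin.cons_zero]

lemma cons2_tail2 {n : ℕ} (a b : Bool) (X : Idx n) :
    (fun i : Fin n => cons2 a b X i.succ.succ) = X := by
  funext i; rw [cons2, Fin.cons_succ, Fin.cons_succ]

lemma eq_cons2 {n : ℕ} (K : Idx (n + 2)) :
    K = cons2 (K 0) (K 1) (fun i => K i.succ.succ) := by
  funext i
  induction i using Fin.cases with
  | zero => rfl
  | succ i =>
      rw [cons2, Fin.cons_succ]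
      induction i using Fin.cases with
      | zero => rw [Fin.cons_zero, Fin.succ_zero_eq_one]
      | succ i => rw [Fin.cons_succ]

lemma lamPre_cons2 {n : ℕ} (c d : Bool) (ε : ECochain n) (a b : Bool) (X : Idx n) :
    lamPre c d ε (cons2 a b X) = (if a = c ∧ b = d then (1 : ℂ) else 0) * ε X := by
  rw [lamPre, cons2_zero, cons2_one, cons2_tail2]

lemma theta_cons2 {n : ℕ} (ε : ECochain n) (a b : Bool) (X : Idx n) :
    theta ε (cons2 a b X) =
      ((if a = false ∧ b = true then (1 : ℂ) else 0)
        - if a = true ∧ b = false then (1 : ℂ) else 0) * ε X := by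
  rw [theta, Pi.sub_apply, lamPre_cons2, lamPre_cons2, sub_mul]

lemma M1 {n : ℕ} (φ : ECochain (n + 1)) (a : Bool) (J : Idx (n + 1)) :
    Dehat φ (Fin.cons a J) =
      (if a = false ∧ J 0 = false then
        msign (1 + pc (Fin.tail J)) * φ (Fin.cons true (Fin.tail J)) else 0)
      + ∑ k : Fin n, msign (pc (repl J k true) + pcP J k.val) *
          ((if J k.castSucc = false ∧ J k.succ = false then (1 : ℂ) else 0) *
            φ (Fin.cons a (repl J k true))) := by
  simp only [Dehat]
  rw [Fin.sum_univ_succ]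
  congr 1
  · rw [repl_cons_zero, Fin.val_zero, pcP_zero, pc_cons, Fin.castSucc_zero, Fin.cons_zero,
      Fin.cons_succ]
    show msign (1 + pc (Fin.tail J) + 0) * _ = _
    rw [Nat.add_zero]
    by_cases h : a = false ∧ J 0 = false
    · simp [h]
    · rcases not_and_or.mp h with h' | h' <;> simp [h', mul_comm]
  · apply Finset.sum_congr rfl
    intro k _
    rw [repl_cons_succ, pc_cons, Fin.val_succ, pcP_cons_succ, ← Fin.succ_castSucc,
      Fin.cons_succ, Fin.cons_succ, msign_cancel]

lemma M {n : ℕ} (φ : ECochain (n + 2)) (a b : Bool) (J : Idx (n + 1)) :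
    Dehat φ (cons2 a b J) =
      (if a = false ∧ b = false then msign (1 + pc J) * φ (Fin.cons true J) else 0)
      + (if b = false ∧ J 0 = false then
          msign (1 + pc (Fin.tail J)) * φ (Fin.cons a (Fin.cons true (Fin.tail J))) else 0)
      + ∑ k : Fin n, msign (pc (repl J k true) + pcP J k.val) *
          ((if J k.castSucc = false ∧ J k.succ = false then (1 : ℂ) else 0) *
            φ (cons2 a b (repl J k true))) := by
  rw [cons2, M1, Fin.cons_zero, Fin.tail_cons, Fin.sum_univ_succ, ← add_assoc]
  congr 2
  · rw [repl_cons_zero, Fin.val_zero, pcP_zero, pc_cons, Fin.castSucc_zero, Fin.cons_zero,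
      Fin.cons_succ, Nat.add_zero]
    by_cases h : b = false ∧ J 0 = false
    · simp [h, pc_cons, pb]
    · rcases not_and_or.mp h with h' | h' <;> simp [h', mul_comm]
  · funext k
    rw [repl_cons_succ, pc_cons, Fin.val_succ, pcP_cons_succ, ← Fin.succ_castSucc,
      Fin.cons_succ, Fin.cons_succ, msign_cancel, cons2]

def pmap {n : ℕ} (ε : ECochain (n + 2)) : ECochain n := fun I => ε (cons2 false true I)

noncomputable def smap {n : ℕ} (ε : ECochain (n + 2)) : ECochain (n + 1) := fun K =>
  if K 0 = true then msign (pc K) * ε (cons2 false false (Fin.tail K)) else 0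

lemma cons_cons_eq_cons2 {n : ℕ} (a b : Bool) (X : Idx n) :
    Fin.cons a (Fin.cons b X) = cons2 a b X := rfl

lemma cons_eq_cons2 {n : ℕ} (a : Bool) (J : Idx (n + 1)) :
    Fin.cons a J = cons2 a (J 0) (Fin.tail J) := by
  rw [cons2, Fin.cons_self_tail]

lemma smap_cons {n : ℕ} (ψ : ECochain (n + 2)) (a : Bool) (W : Idx n) :
    smap ψ (Fin.cons a W) =
      if a = true then msign (pb a + pc W) * ψ (cons2 false false W) else 0 := by
  simp [smap, pc_cons]

lemma pmap_theta {n : ℕ} (ε : ECochain n) : pmap (theta ε) = ε := by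
  funext I
  rw [pmap, theta_cons2]
  simp

lemma pmap_Dehat {n : ℕ} (φ : ECochain (n + 2)) :
    pmap (Dehat φ) = Dehat (pmap φ) := by
  funext J
  rw [show pmap (Dehat φ) J = Dehat φ (cons2 false true J) from rfl, M]
  simp [Dehat, pmap]

lemma Dehat_theta {n : ℕ} (ε : ECochain n) : Dehat (theta ε) = theta (Dehat ε) := by
  funext K
  rw [eq_cons2 K]
  generalize (fun i : Fin (n + 1) => K i.succ.succ) = J
  generalize K 0 = a
  generalize K 1 = b
  rw [M, theta_cons2, cons_eq_cons2 true J]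
  simp only [cons_cons_eq_cons2, theta_cons2]
  cases a <;> cases b <;> cases hJ0 : J 0 <;>
    simp [Dehat, pc_head_tail J, hJ0, pb, msign_succ, Finset.mul_sum, mul_comm,
      mul_left_comm]

lemma sum_cancel {n : ℕ} (φ : ECochain (n + 2)) (b : Bool) (X : Idx n) :
    (∑ x : Fin n, if (Fin.cons b X : Idx (n+1)) x.castSucc = false ∧ X x = false then
        msign (pc (repl (Fin.cons b X) x true) + pcP (Fin.cons b X) x.val) *
          (msign (1 + pc (repl (Fin.cons b X) x true)) *
            φ (cons2 false false (repl (Fin.cons b X) x true))) else 0)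
      + msign (1 + pc (Fin.cons b X)) *
        ∑ x : Fin n, (if (Fin.cons b X : Idx (n+1)) x.castSucc = false ∧ X x = false then
          msign (pc (repl (Fin.cons b X) x true) + pcP (Fin.cons b X) x.val) *
            φ (cons2 false false (repl (Fin.cons b X) x true)) else 0) = 0 := by
  rw [Finset.mul_sum, ← Finset.sum_add_distrib]
  apply Finset.sum_eq_zero
  intro k _
  by_cases h : (Fin.cons b X : Idx (n+1)) k.castSucc = false ∧ X k = false
  · have h3 := pc_repl (Fin.cons b X) k true
    rw [Fin.cons_succ, h.1, h.2] at h3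
    have hpc : pc (repl (Fin.cons b X) k true) = pc (Fin.cons b X) + 1 := by
      simp [pb] at h3; omega
    simp only [h, and_self, if_true]
    rw [hpc, show 1 + (pc (Fin.cons b X) + 1) = (1 + pc (Fin.cons b X)) + 1 from by omega,
      msign_succ]
    ring
  · simp [h]

lemma homotopy_aux {n : ℕ} (φ : ECochain (n + 2)) (a b : Bool) (X : Idx n) :
    Dehat (smap φ) (cons2 a b X) + smap (Dehat φ) (cons2 a b X)
      = φ (cons2 a b X) - theta (pmap φ) (cons2 a b X) := by
  rw [theta_cons2, ← cons_cons_eq_cons2, M1, smap_cons (Dehat φ) a (Fin.cons b X),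
    M φ false false (Fin.cons b X)]
  simp only [Fin.cons_zero, Fin.tail_cons, smap_cons, pb, pc_cons, cons_cons_eq_cons2, pmap]
  cases a <;> cases b <;> simp [pc_cons, pb]
  · rw [← mul_assoc, msign_sq, one_mul]
  · have key := sum_cancel φ false X
    rw [show pc (Fin.cons false X) = pc X from by simp [pc_cons, pb]] at key
    linear_combination key + (φ (cons2 true false X) + φ (cons2 false true X)) * msign_sq (1 + pc X)
  · have key := sum_cancel φ true X
    rw [show pc (Fin.cons true X) = 1 + pc X from by simp [pc_cons, pb]] at key
    linear_combination key + φ (cons2 true true X) * msign_sq (1 + (1 + pc X))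

lemma theta_zero {n : ℕ} : theta (0 : ECochain n) = 0 := by
  funext J; simp [theta, lamPre]

lemma theta_add {n : ℕ} (x y : ECochain n) : theta (x + y) = theta x + theta y := by
  funext J; simp only [theta, lamPre, Pi.sub_apply, Pi.add_apply]; split_ifs <;> ring

lemma theta_smul {n : ℕ} (c : ℂ) (x : ECochain n) : theta (c • x) = c • theta x := by
  funext J; simp only [theta, lamPre, Pi.sub_apply, Pi.smul_apply, smul_eq_mul]; split_ifs <;> ring

lemma Ch_cocycle : ∀ n, Dehat (Ch n) = 0 := by
  intro n
  induction n using Nat.twoStepInduction with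
  | zero => funext J; simp [Dehat]
  | one =>
      funext J
      have h0 : ∀ k : Fin 1, repl J k true 0 = true := by
        intro k
        have : k = 0 := Subsingleton.elim _ _
        subst this
        simp [repl]
      simp [Dehat, Ch, h0]
  | more n ih _ =>
      show Dehat (theta (Ch n)) = 0
      rw [Dehat_theta, ih, theta_zero]

lemma deg1_ker {ε : ECochain 1} (h : Dehat ε = 0) : ε = (ε (fun _ => false)) • Ch 1 := by
  have hrepl : repl (fun _ => false : Idx 2) (0 : Fin 1) true = fun _ => true := by
    funext i
    have : i = 0 := Subsingleton.elim _ _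
    subst this
    simp [repl]
  have h0 := congrFun h (fun _ => false : Idx 2)
  rw [show Dehat ε (fun _ => false) = ∑ k : Fin 1, msign (pc (repl (fun _ => false : Idx 2) k true) + pcP (fun _ => false : Idx 2) k.val) * ((if (fun _ => false : Idx 2) k.castSucc = false ∧ (fun _ => false : Idx 2) k.succ = false then (1:ℂ) else 0) * ε (repl (fun _ => false : Idx 2) k true)) from rfl,
    Fin.sum_univ_one, hrepl] at h0
  have htrue : ε (fun _ => true) = 0 := by
    simp [pc, pb, pcP_zero, msign] at h0
    exact h0
  funext J
  rcases hJ : J 0 with _ | _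
  · have : J = fun _ => false := by
      funext i
      have : i = 0 := Subsingleton.elim _ _
      rw [this, hJ]
    rw [this]
    simp [Ch]
  · have : J = fun _ => true := by
      funext i
      have : i = 0 := Subsingleton.elim _ _
      rw [this, hJ]
    rw [this]
    simp [Ch, htrue]

lemma span_lemma : ∀ n, ∀ ε : ECochain n, Dehat ε = 0 → ∃ a : ℂ, ε - a • Ch n ∈ BE n := by
  intro n
  induction n using Nat.twoStepInduction with
  | zero =>
      intro ε _
      refine ⟨ε (fun i => i.elim0), ?_⟩
      have hz : ε - ε (fun i => i.elim0) • Ch 0 = 0 := by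
        funext J
        have hJ : J = fun i => i.elim0 := funext fun i => i.elim0
        rw [hJ]
        simp [Ch]
      rw [show BE 0 = ⊥ from rfl, hz]
      exact Submodule.zero_mem _
  | one =>
      intro ε hε
      refine ⟨ε (fun _ => false), ?_⟩
      have hz : ε - ε (fun _ => false) • Ch 1 = 0 := sub_eq_zero.mpr (deg1_ker hε)
      rw [hz]
      exact Submodule.zero_mem _
  | more n ih _ =>
      intro ε hε
      have hp : Dehat (pmap ε) = 0 := by
        rw [← pmap_Dehat, hε]
        funext I; rfl
      obtain ⟨a, hb⟩ := ih (pmap ε) hp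
      have hD : Dehat (smap ε) = ε - theta (pmap ε) := by
        funext K
        rw [eq_cons2 K]
        have h2 := homotopy_aux ε (K 0) (K 1) (fun i => K i.succ.succ)
        rw [hε] at h2
        simpa [smap] using h2
      cases n with
      | zero =>
          rw [show BE 0 = ⊥ from rfl, Submodule.mem_bot] at hb
          have hb' : pmap ε = a • Ch 0 := sub_eq_zero.mp hb
          refine ⟨a, ?_⟩
          rw [show BE 2 = LinearMap.range (DehatLin 1) from rfl, LinearMap.mem_range]
          refine ⟨smap ε, ?_⟩
          show Dehat (smap ε) = ε - a • Ch 2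
          rw [hD, hb', theta_smul, show Ch 2 = theta (Ch 0) from rfl]
      | succ m =>
          rw [show BE (m + 1) = LinearMap.range (DehatLin m) from rfl, LinearMap.mem_range] at hb
          obtain ⟨ψ, hψ⟩ := hb
          have hψ' : pmap ε = Dehat ψ + a • Ch (m + 1) := by
            have h3 : Dehat ψ = pmap ε - a • Ch (m + 1) := hψ
            rw [h3]; abel
          refine ⟨a, ?_⟩
          rw [show BE (m + 3) = LinearMap.range (DehatLin (m + 2)) from rfl, LinearMap.mem_range]
          refine ⟨smap ε + theta ψ, ?_⟩
          show Dehat (smap ε + theta ψ) = ε - a • Ch (m + 3)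
          have hadd : Dehat (smap ε + theta ψ) = Dehat (smap ε) + Dehat (theta ψ) :=
            (DehatLin _).map_add (smap ε) (theta ψ)
          rw [hadd, hD, hψ', theta_add, theta_smul, ← Dehat_theta,
            show Ch (m + 3) = theta (Ch (m + 1)) from rfl]
          abel

noncomputable def pmapLin (n : ℕ) : ECochain (n + 2) →ₗ[ℂ] ECochain n where
  toFun := pmap
  map_add' _ _ := rfl
  map_smul' _ _ := rfl

noncomputable def lamLin : (n : ℕ) → ECochain n →ₗ[ℂ] ℂ
  | 0 => LinearMap.proj (fun i => i.elim0)
  | 1 => LinearMap.proj (fun _ => false)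
  | (n + 2) => (lamLin n).comp (pmapLin n)

lemma lamLin_succ2 (n : ℕ) (ε : ECochain (n + 2)) :
    lamLin (n + 2) ε = lamLin n (pmap ε) := rfl

lemma lam_Ch : ∀ n, lamLin n (Ch n) = 1 := by
  intro n
  induction n using Nat.twoStepInduction with
  | zero => rfl
  | one => simp [lamLin, Ch]
  | more n ih _ =>
      rw [lamLin_succ2, show Ch (n + 2) = theta (Ch n) from rfl, pmap_theta]
      exact ih

lemma lam_D : ∀ n, ∀ φ : ECochain n, lamLin (n + 1) (Dehat φ) = 0 := by
  intro n
  induction n using Nat.twoStepInduction with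
  | zero =>
      intro φ
      show Dehat φ (fun _ => false) = 0
      simp [Dehat]
  | one =>
      intro φ
      show Dehat φ (cons2 false true (fun i => i.elim0)) = 0
      have h1 : ∀ k : Fin 1, cons2 false true (fun i => (i : Fin 0).elim0) k.succ = true := by
        intro k
        have : k = 0 := Subsingleton.elim _ _
        subst this
        rw [show ((0 : Fin 1).succ) = (1 : Fin 2) from rfl, cons2_one]
      simp [Dehat, h1]
  | more n ih _ =>
      intro φ
      refine (lamLin_succ2 (n + 1) (Dehat φ)).trans ?_
      rw [pmap_Dehat]
      exact ih (pmap φ)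

lemma Ch_mem_ZE (n : ℕ) : Ch n ∈ ZE n := by
  rw [ZE, LinearMap.mem_ker]
  show Dehat (Ch n) = 0
  exact Ch_cocycle n

lemma lam_BE (n : ℕ) : ∀ y ∈ BE n, lamLin n y = 0 := by
  cases n with
  | zero =>
      intro y hy
      rw [show BE 0 = ⊥ from rfl, Submodule.mem_bot] at hy
      rw [hy, map_zero]
  | succ m =>
      intro y hy
      rw [show BE (m + 1) = LinearMap.range (DehatLin m) from rfl, LinearMap.mem_range] at hy
      obtain ⟨ψ, rfl⟩ := hy
      exact lam_D m ψ

lemma rank_HE (n : ℕ) : Module.rank ℂ (HE n) = 1 := by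
  let L : ZE n →ₗ[ℂ] ℂ := (lamLin n).comp (ZE n).subtype
  have hL : ∀ x : ZE n, L x = lamLin n x.1 := fun _ => rfl
  have hsur : Function.Surjective L := by
    intro c
    refine ⟨c • ⟨Ch n, Ch_mem_ZE n⟩, ?_⟩
    rw [map_smul, hL, smul_eq_mul]
    show c * lamLin n (Ch n) = c
    rw [lam_Ch, mul_one]
  have hker : LinearMap.ker L = Submodule.comap (ZE n).subtype (BE n) := by
    ext x
    rw [LinearMap.mem_ker, Submodule.mem_comap, hL]
    constructor
    · intro hx
      have hx2 : Dehat x.1 = 0 := x.2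
      obtain ⟨a, ha⟩ := span_lemma n x.1 hx2
      have h0 := lam_BE n _ ha
      rw [map_sub, map_smul, lam_Ch, hx, smul_eq_mul, mul_one, zero_sub, neg_eq_zero] at h0
      rw [h0, zero_smul, sub_zero] at ha
      exact ha
    · intro hx
      exact lam_BE n _ hx
  have e : HE n ≃ₗ[ℂ] ℂ :=
    (Submodule.quotEquivOfEq _ _ hker.symm).trans (L.quotKerEquivOfSurjective hsur)
  rw [e.rank_eq, Module.rank_self]

/-- For `d₆ = ψ_f^{ee}`, the cohomology of `D_e` on the `E`-complex is exactly
1-dimensional in each degree `n ≥ 0`, spanned by the class of the DeCleene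
cocycle `Chⁿ_e`. -/
theorem De_cohomology_one_dimensional :
    ∀ n : ℕ,
      Ch n ∈ ZE n
        ∧ Module.rank ℂ (HE n) = 1
        ∧ ∀ ε ∈ ZE n, ∃ a : ℂ, ε - a • Ch n ∈ BE n := by
  intro n
  refine ⟨Ch_mem_ZE n, rank_HE n, fun ε hε => ?_⟩
  exact span_lemma n ε hε
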